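/- arXiv:2406.19978 — 6 statements merged into one kernel-verified Lean document; each statement's English description precedes it below -/
import Mathlib

section
/- The expected number of draws without replacement from an urn with M balls (K green) until obtaining k green balls equals k * (M+1) / (K+1). -/
open Finset

/-!
Absorption, `v * C(v-1, k-1) = k * C(v, k)`, turns the expectation into
`k / C(M, K) * ∑ᵥ C(v, k) * C(M-v, K-k)`. The sum is the upper Vandermonde identity: choosing
`K+1` elements of `{0, …, M}` and classifying by the value `v` of the `(k+1)`-st smallest gives
`C(M+1, K+1)`. Finally `C(M+1, K+1) / C(M, K) = (M+1) / (K+1)`.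
-/

theorem Nat.sum_antidiagonal_choose_mul_choose (n k l : ℕ) :
    ∑ p ∈ antidiagonal n, p.1.choose k * p.2.choose l = (n + 1).choose (k + l + 1) := by
  induction n generalizing k with
  | zero => cases k <;> cases l <;> simp [Nat.choose_eq_zero_of_lt]
  | succ n ih =>
    rw [Finset.Nat.sum_antidiagonal_succ]
    cases k with
    | zero =>
      have ih0 := ih 0
      simp only [Nat.choose_zero_right, one_mul, zero_add] at ih0 ⊢
      rw [ih0, Nat.choose_succ_succ' (n + 1), add_comm]
    | succ k =>
      simp only [Nat.choose_zero_succ, zero_mul, zero_add, Nat.choose_succ_succ' _ k, add_mul,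
        sum_add_distrib, ih]
      rw [show k + 1 + l + 1 = k + l + 1 + 1 by omega, Nat.choose_succ_succ' (n + 1) (k + l + 1)]

theorem Nat.sum_range_choose_mul_choose_sub (n k l : ℕ) :
    ∑ v ∈ range (n + 1), v.choose k * (n - v).choose l = (n + 1).choose (k + l + 1) := by
  rw [← Finset.Nat.sum_antidiagonal_eq_sum_range_succ (fun i j => i.choose k * j.choose l),
    Nat.sum_antidiagonal_choose_mul_choose]

theorem Nat.mul_sub_one_choose_sub_one (n : ℕ) {k : ℕ} (hk : k ≠ 0) :
    n * (n - 1).choose (k - 1) = k * n.choose k := by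
  obtain ⟨k, rfl⟩ := Nat.exists_eq_succ_of_ne_zero hk
  cases n with
  | zero => simp
  | succ n => simpa [mul_comm] using Nat.add_one_mul_choose_eq n k

theorem Nat.sum_Icc_mul_choose_mul_choose {M K k : ℕ} (hk : k ≠ 0) (hkK : k ≤ K) :
    ∑ v ∈ Icc 1 M, v * ((v - 1).choose (k - 1) * (M - v).choose (K - k)) =
      k * (M + 1).choose (K + 1) := by
  have hrange : ∑ v ∈ range (M + 1), v * ((v - 1).choose (k - 1) * (M - v).choose (K - k)) =
      ∑ v ∈ Icc 1 M, v * ((v - 1).choose (k - 1) * (M - v).choose (K - k)) := by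
    rw [range_eq_Ico, sum_eq_sum_Ico_succ_bot M.succ_pos, zero_mul, zero_add,
      Nat.succ_eq_add_one, Ico_add_one_right_eq_Icc]
  simp_rw [← hrange, ← mul_assoc, Nat.mul_sub_one_choose_sub_one (hk := hk), mul_assoc, ← mul_sum,
    Nat.sum_range_choose_mul_choose_sub, Nat.add_sub_cancel' hkK]

/-- The expected number of draws without replacement from an urn with `M` balls (`K` green)
until obtaining `k` green balls equals `k (M+1)/(K+1)`:  the expectation of the negative
hypergeometric waiting time `V`, whose pmf is `P{V = v} = C(v-1,k-1) C(M-v,K-k)/C(M,K)`. -/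
theorem stmt3 (M K k : ℕ) (hk : 1 ≤ k) (hkK : k ≤ K) (hKM : K ≤ M) :
    ∑ v ∈ Finset.Icc 1 M,
        (v : ℝ) * (((v - 1).choose (k - 1) * (M - v).choose (K - k) : ℕ) / (M.choose K : ℝ)) =
      k * (M + 1) / (K + 1) := by
  have hchoose : (M.choose K : ℝ) ≠ 0 := by exact_mod_cast (Nat.choose_pos hKM).ne'
  have hchoose_succ : ((K : ℝ) + 1) * (M + 1).choose (K + 1) = (M + 1) * M.choose K := by
    exact_mod_cast (mul_comm _ _).trans (Nat.add_one_mul_choose_eq M K).symm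
  have hsum := Nat.sum_Icc_mul_choose_mul_choose (M := M) (Nat.one_le_iff_ne_zero.mp hk) hkK
  simp_rw [mul_div_assoc', ← sum_div, ← Nat.cast_mul, ← Nat.cast_sum, hsum]
  rw [div_eq_div_iff hchoose (by positivity)]
  push_cast
  linear_combination (k : ℝ) * hchoose_succ
end

section
/- For 0 < γ < 1, the function β ↦ z_R(β, γ) = (1-β)^{1-β} * (β + γ(1-β))^{β+γ(1-β)} / (γ(1-β))^{γ(1-β)} on (0,1) attains its minimum at β*(γ) = ((1/γ)^{γ/(1-γ)} - γ) / ((1/γ)^{γ/(1-γ)} - γ + 1). -/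
open Real

/-- `z_R(β,γ) = (1-β)^{1-β} (β+γ(1-β))^{β+γ(1-β)} / (γ(1-β))^{γ(1-β)}` (real powers). -/
noncomputable def zR (β γ : ℝ) : ℝ :=
  (1 - β) ^ (1 - β) * (β + γ * (1 - β)) ^ (β + γ * (1 - β)) / (γ * (1 - β)) ^ (γ * (1 - β))

/-- `β*(γ) = ((1/γ)^{γ/(1-γ)} - γ) / ((1/γ)^{γ/(1-γ)} - γ + 1)`. -/
noncomputable def βstar (γ : ℝ) : ℝ :=
  ((1 / γ) ^ (γ / (1 - γ)) - γ) / ((1 / γ) ^ (γ / (1 - γ)) - γ + 1)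

/-!
Write `u = 1 - β`. Since `β + γ(1-β) = 1 - (1-γ)u`, the logarithm of `z_R` is
`(1-γ) u log u - γ log γ · u + s log s` with `s = 1 - (1-γ)u`, a convex function of `u`
(as `x ↦ x log x` is convex). Its derivative vanishes exactly when `s / u = γ^{-γ/(1-γ)}`,
which is the point `u = 1 - β*(γ)`, so the tangent-line inequalities for `x log x` at that
point show it is the global minimum.
-/

lemma mul_log_tangent_le {x y : ℝ} (hx : 0 < x) (hy : 0 < y) :
    y * log y + (1 + log y) * (x - y) ≤ x * log x := by
  have h := mul_le_mul_of_nonneg_left (log_le_sub_one_of_pos (div_pos hy hx)) hx.le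
  rw [log_div hy.ne' hx.ne', mul_sub_one, mul_div_cancel₀ _ hx.ne'] at h
  linarith

noncomputable def logZR (γ u : ℝ) : ℝ :=
  (1 - γ) * (u * log u) - γ * log γ * u + (1 - (1 - γ) * u) * log (1 - (1 - γ) * u)

lemma zR_eq_exp_logZR {β γ : ℝ} (hγ : 0 < γ) (hβ₀ : 0 ≤ β) (hβ₁ : β < 1) :
    zR β γ = exp (logZR γ (1 - β)) := by
  have hu : 0 < 1 - β := by linarith
  have hs : 0 < β + γ * (1 - β) := by positivity
  have hs' : 1 - (1 - γ) * (1 - β) = β + γ * (1 - β) := by ring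
  rw [zR, rpow_def_of_pos hu, rpow_def_of_pos hs, rpow_def_of_pos (mul_pos hγ hu),
    ← exp_add, ← exp_sub, logZR, hs', log_mul hγ.ne' hu.ne']
  ring_nf

lemma logZR_le_of_critical {γ u₀ u : ℝ} (hγ : γ ≤ 1) (hu₀ : 0 < u₀)
    (hs₀ : 0 < 1 - (1 - γ) * u₀) (hu : 0 < u) (hs : 0 < 1 - (1 - γ) * u)
    (hcrit : (1 - γ) * (log u₀ - log (1 - (1 - γ) * u₀)) = γ * log γ) :
    logZR γ u₀ ≤ logZR γ u := by
  have h₁ := mul_le_mul_of_nonneg_left (mul_log_tangent_le hu hu₀) (sub_nonneg.2 hγ)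
  have h₂ := mul_log_tangent_le hs hs₀
  rw [logZR, logZR]
  linear_combination h₁ + h₂ + (u₀ - u) * hcrit

lemma one_lt_one_div_rpow {γ : ℝ} (hγ : γ ∈ Set.Ioo (0 : ℝ) 1) :
    1 < (1 / γ) ^ (γ / (1 - γ)) :=
  one_lt_rpow (by rw [lt_div_iff₀ hγ.1]; linarith [hγ.2])
    (div_pos hγ.1 (by linarith [hγ.2]))

lemma one_sub_βstar {γ : ℝ} (hγ : γ ∈ Set.Ioo (0 : ℝ) 1) :
    1 - βstar γ = 1 / ((1 / γ) ^ (γ / (1 - γ)) - γ + 1) := by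
  have := one_lt_one_div_rpow hγ
  have hD : (1 / γ) ^ (γ / (1 - γ)) - γ + 1 ≠ 0 := by linarith [hγ.2]
  rw [βstar]
  field_simp
  ring

lemma βstar_mem_Ioo {γ : ℝ} (hγ : γ ∈ Set.Ioo (0 : ℝ) 1) : βstar γ ∈ Set.Ioo (0 : ℝ) 1 := by
  have := one_lt_one_div_rpow hγ
  have hD : 0 < (1 / γ) ^ (γ / (1 - γ)) - γ + 1 := by linarith [hγ.2]
  exact ⟨div_pos (by linarith [hγ.2]) hD, (div_lt_one hD).2 (by linarith)⟩

lemma one_sub_mul_one_sub_βstar {γ : ℝ} (hγ : γ ∈ Set.Ioo (0 : ℝ) 1) :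
    1 - (1 - γ) * (1 - βstar γ) = (1 / γ) ^ (γ / (1 - γ)) * (1 - βstar γ) := by
  have := one_lt_one_div_rpow hγ
  have hD : (1 / γ) ^ (γ / (1 - γ)) - γ + 1 ≠ 0 := by linarith [hγ.2]
  rw [one_sub_βstar hγ]
  field_simp
  ring

lemma critical_βstar {γ : ℝ} (hγ : γ ∈ Set.Ioo (0 : ℝ) 1) :
    (1 - γ) * (log (1 - βstar γ) - log (1 - (1 - γ) * (1 - βstar γ))) = γ * log γ := by
  have hu₀ : 0 < 1 - βstar γ := by linarith [(βstar_mem_Ioo hγ).2]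
  have h1γ : 1 - γ ≠ 0 := by linarith [hγ.2]
  rw [one_sub_mul_one_sub_βstar hγ, log_mul (by linarith [one_lt_one_div_rpow hγ]) hu₀.ne',
    log_rpow (by simpa using hγ.1), one_div, log_inv]
  field_simp
  ring

/-- For `0 < γ < 1`, the function `β ↦ z_R(β,γ)` on `(0,1)` attains its minimum at
`β = β*(γ)`. -/
theorem stmt8 (γ : ℝ) (hγ : γ ∈ Set.Ioo (0:ℝ) 1) :
    βstar γ ∈ Set.Ioo (0:ℝ) 1 ∧ ∀ β ∈ Set.Ioo (0:ℝ) 1, zR (βstar γ) γ ≤ zR β γ := by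
  have hβstar := βstar_mem_Ioo hγ
  refine ⟨hβstar, fun β hβ => ?_⟩
  have hs (b : ℝ) (hb : b ∈ Set.Ioo (0 : ℝ) 1) : 0 < 1 - (1 - γ) * (1 - b) := by
    nlinarith [hγ.1, hγ.2, hb.1, hb.2]
  rw [zR_eq_exp_logZR hγ.1 hβ.1.le hβ.2,
    zR_eq_exp_logZR hγ.1 hβstar.1.le hβstar.2, exp_le_exp]
  exact logZR_le_of_critical hγ.2.le (by linarith [hβstar.2]) (hs _ hβstar)
    (by linarith [hβ.2]) (hs β hβ) (critical_βstar hγ)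
end

section
/- For 0 < γ < 1, substituting β = β*(γ) = ((1/γ)^{γ/(1-γ)} - γ)/((1/γ)^{γ/(1-γ)} - γ + 1) into z_R(β,γ) yields z_R(β*(γ), γ) = (1/γ)^{γ/(1-γ)} / ((1/γ)^{γ/(1-γ)} - γ + 1). -/
open Real

/-- For `0 < γ < 1`, `z_R(β*(γ), γ) = (1/γ)^{γ/(1-γ)} / ((1/γ)^{γ/(1-γ)} - γ + 1)`. -/
theorem stmt9 (γ : ℝ) (hγ : γ ∈ Set.Ioo (0:ℝ) 1) :
    zR (βstar γ) γ =
      (1 / γ) ^ (γ / (1 - γ)) / ((1 / γ) ^ (γ / (1 - γ)) - γ + 1) := by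
  obtain ⟨hγ0, hγ1⟩ := hγ
  have hγ' : (0:ℝ) < 1 - γ := by linarith
  set A : ℝ := (1 / γ) ^ (γ / (1 - γ)) with hAdef
  have hA1 : 1 < A := by
    rw [hAdef]
    apply (Real.one_lt_rpow_iff_of_pos (by positivity)).mpr
    left
    constructor
    · rw [lt_div_iff₀ hγ0]; linarith
    · positivity
  have hlogA : (1 - γ) * Real.log A = -(γ * Real.log γ) := by
    rw [hAdef, Real.log_rpow (by positivity),
      Real.log_div one_ne_zero (ne_of_gt hγ0), Real.log_one]
    field_simp
    ring
  clear_value A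
  have hDpos : (0:ℝ) < A - γ + 1 := by linarith
  set D : ℝ := A - γ + 1 with hDdef
  clear_value D
  have hDne : D ≠ 0 := ne_of_gt hDpos
  have hb : βstar γ = (A - γ) / D := by simp only [βstar, ← hAdef, ← hDdef]
  have h1 : 1 - βstar γ = 1 / D := by
    rw [hb]; field_simp; rw [hDdef]; ring
  have h2 : γ * (1 - βstar γ) = γ / D := by rw [h1]; ring
  have h3 : βstar γ + γ * (1 - βstar γ) = A / D := by
    rw [hb]; field_simp; rw [hDdef]; ring
  have hApos : (0:ℝ) < A := by linarith
  have key : Real.log (1 / D) * (1 / D) + Real.log (A / D) * (A / D)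
      - Real.log (γ / D) * (γ / D) = Real.log (A / D) := by
    rw [Real.log_div one_ne_zero hDne, Real.log_div (ne_of_gt hApos) hDne,
      Real.log_div (ne_of_gt hγ0) hDne, Real.log_one]
    linear_combination (norm := (field_simp; ring)) (-(1:ℝ)/D) * hlogA - ((Real.log A - Real.log D)/D) * hDdef
  rw [zR, h3, h2, h1,
    Real.rpow_def_of_pos (by positivity : (0:ℝ) < 1 / D),
    Real.rpow_def_of_pos (by positivity : (0:ℝ) < A / D),
    Real.rpow_def_of_pos (by positivity : (0:ℝ) < γ / D),
    ← Real.exp_add, ← Real.exp_sub, key, Real.exp_log (by positivity)]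
end

section
/- As γ → 1-, β*(γ) tends to 1 - 1/e, and z_R(β*(γ), γ) tends to 1. -/
open Real Filter

noncomputable def zRstar (γ : ℝ) : ℝ :=
  (1 / γ) ^ (γ / (1 - γ)) / ((1 / γ) ^ (γ / (1 - γ)) - γ + 1)

open Topology

/-! Substituting `x = γ / (1 - γ)`, which tends to `∞` as `γ → 1⁻`, gives `1 / γ = 1 + 1 / x`, so
`(1 / γ) ^ (γ / (1 - γ)) = (1 + 1 / x) ^ x → e`. Both `β*` and `z_R` are continuous functions of this
quantity and of `γ`, with limits `(e - 1) / e` and `e / e`. -/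

lemma tendsto_one_sub_nhdsLT_one : Tendsto (fun γ : ℝ => 1 - γ) (𝓝[<] 1) (𝓝[>] 0) := by
  refine tendsto_nhdsWithin_iff.mpr ⟨?_, ?_⟩
  · exact ((continuous_sub_left 1).tendsto' 1 0 (sub_self 1)).mono_left nhdsWithin_le_nhds
  · filter_upwards [self_mem_nhdsWithin] with γ (hγ : γ < 1)
    exact sub_pos.mpr hγ

lemma tendsto_div_one_sub_nhdsLT_one : Tendsto (fun γ : ℝ => γ / (1 - γ)) (𝓝[<] 1) atTop := by
  refine (tendsto_atTop_add_const_right _ (-1)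
    (tendsto_inv_nhdsGT_zero.comp tendsto_one_sub_nhdsLT_one)).congr' ?_
  filter_upwards [self_mem_nhdsWithin] with γ (hγ : γ < 1)
  have : 1 - γ ≠ 0 := (sub_pos.mpr hγ).ne'
  simp only [Function.comp_apply]
  field_simp
  ring

lemma tendsto_one_div_rpow_div_one_sub_nhdsLT_one :
    Tendsto (fun γ : ℝ => (1 / γ) ^ (γ / (1 - γ))) (𝓝[<] 1) (𝓝 (exp 1)) := by
  refine ((tendsto_one_add_div_rpow_exp 1).comp tendsto_div_one_sub_nhdsLT_one).congr' ?_
  filter_upwards [Ioo_mem_nhdsLT zero_lt_one] with γ ⟨hγ, _⟩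
  have : 1 + 1 / (γ / (1 - γ)) = 1 / γ := by
    field_simp
    ring
  simp only [Function.comp_apply, this]

/-- As `γ → 1⁻`, `β*(γ) → 1 - 1/e` and `z_R(β*(γ),γ) → 1`. -/
theorem stmt11 :
    Tendsto βstar (nhdsWithin 1 (Set.Iio 1)) (nhds (1 - 1 / Real.exp 1)) ∧
    Tendsto zRstar (nhdsWithin 1 (Set.Iio 1)) (nhds 1) := by
  have hE := tendsto_one_div_rpow_div_one_sub_nhdsLT_one
  have hnum := hE.sub (tendsto_id.mono_left nhdsWithin_le_nhds)
  have hden := hnum.add_const 1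
  rw [sub_add_cancel] at hden
  have he : exp 1 ≠ 0 := (exp_pos 1).ne'
  constructor
  · rw [show 1 - 1 / exp 1 = (exp 1 - 1) / exp 1 by field_simp]
    exact hnum.div hden he
  · have h := hE.div hden he
    rwa [div_self he] at h
end

section
/- The function γ ↦ z_R(β*(γ), γ) = (1/γ)^{γ/(1-γ)} / ((1/γ)^{γ/(1-γ)} - γ + 1) is monotonically increasing on (0,1). -/
/-!
Writing `c = γ / (1 - γ)`, one has `1 / zRstar γ - 1 = (1 - γ) γ ^ c = exp (h γ)` with
`h γ = log (1 - γ) + c log γ` (`zRstarExponent`). The derivative of `h` collapses to `log γ / (1 - γ) ^ 2 < 0`,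
so `h` decreases on `(0, 1)` and `zRstar γ = 1 / (1 + exp (h γ))` increases.
-/

open Real

noncomputable def zRstarExponent (γ : ℝ) : ℝ :=
  log (1 - γ) + γ / (1 - γ) * log γ

lemma zRstar_eq_one_div_one_add_exp {γ : ℝ} (h0 : 0 < γ) (h1 : γ < 1) :
    zRstar γ = 1 / (1 + exp (zRstarExponent γ)) := by
  set c := γ / (1 - γ)
  have hpow : 0 < γ ^ c := rpow_pos_of_pos h0 c
  have hexp : exp (zRstarExponent γ) = (1 - γ) * γ ^ c := by
    rw [zRstarExponent, exp_add, exp_log (by linarith), rpow_def_of_pos h0, mul_comm c]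
  have hinv : (1 / γ) ^ c = (γ ^ c)⁻¹ := by rw [one_div, inv_rpow h0.le]
  have hden : 0 < (γ ^ c)⁻¹ - γ + 1 := by have := inv_pos.2 hpow; linarith
  rw [zRstar, hexp, hinv, div_eq_div_iff hden.ne' (by positivity)]
  field_simp
  ring

lemma hasDerivAt_zRstarExponent {γ : ℝ} (h0 : 0 < γ) (h1 : γ < 1) :
    HasDerivAt zRstarExponent (log γ / (1 - γ) ^ 2) γ := by
  have h1' : 1 - γ ≠ 0 := sub_ne_zero.2 h1.ne'
  have hsub : HasDerivAt (fun x : ℝ => 1 - x) (-1) γ := by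
    simpa using (hasDerivAt_id γ).const_sub 1
  refine HasDerivAt.congr_deriv (f := zRstarExponent)
    ((hsub.log h1').add (((hasDerivAt_id' γ).div hsub h1').mul (hasDerivAt_log h0.ne'))) ?_
  simp only [Pi.div_apply]
  field_simp
  ring

lemma zRstarExponent_strictAntiOn : StrictAntiOn zRstarExponent (Set.Ioo 0 1) := by
  refine strictAntiOn_of_hasDerivWithinAt_neg (f' := fun x => log x / (1 - x) ^ 2)
    (convex_Ioo 0 1)
    (fun x hx => (hasDerivAt_zRstarExponent hx.1 hx.2).continuousAt.continuousWithinAt)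
    (fun x hx => ?_) (fun x hx => ?_)
  all_goals rw [interior_Ioo] at hx
  · exact (hasDerivAt_zRstarExponent hx.1 hx.2).hasDerivWithinAt
  · exact div_neg_of_neg_of_pos (log_neg hx.1 hx.2) (pow_pos (sub_pos.2 hx.2) 2)

lemma StrictAntiOn.one_div_one_add_exp {f : ℝ → ℝ} {s : Set ℝ} (hf : StrictAntiOn f s) :
    StrictMonoOn (fun x => 1 / (1 + exp (f x))) s :=
  fun _ hx _ hy hxy => one_div_lt_one_div_of_lt (by positivity) (by
    simpa using exp_lt_exp.2 (hf hx hy hxy))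

/-- `γ ↦ z_R(β*(γ), γ)` is monotonically increasing on `(0,1)`. -/
theorem stmt12 : StrictMonoOn zRstar (Set.Ioo (0:ℝ) 1) :=
  zRstarExponent_strictAntiOn.one_div_one_add_exp.congr fun _ hγ =>
    (zRstar_eq_one_div_one_add_exp hγ.1 hγ.2).symm
end

section
/- For all γ ∈ (0,1), 1/2 < z_R(β*(γ), γ) < 1. -/
open Real

/-- For all `γ ∈ (0,1)`, `1/2 < z_R(β*(γ), γ) < 1`. -/
theorem stmt13 (γ : ℝ) (hγ : γ ∈ Set.Ioo (0:ℝ) 1) :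
    1 / 2 < zRstar γ ∧ zRstar γ < 1 := by
  obtain ⟨h0, h1⟩ := hγ
  set A : ℝ := (1 / γ) ^ (γ / (1 - γ)) with hA
  have hbase : (1:ℝ) < 1 / γ := by
    rw [lt_div_iff₀ h0]; linarith
  have hexp : 0 < γ / (1 - γ) := div_pos h0 (by linarith)
  have hA1 : 1 < A := Real.one_lt_rpow_iff_of_pos (by linarith) |>.mpr (Or.inl ⟨hbase, hexp⟩)
  have hden : 0 < A - γ + 1 := by linarith
  unfold zRstar
  rw [← hA]
  constructor
  · rw [div_lt_div_iff₀ (by norm_num) hden]; linarith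
  · rw [div_lt_one hden]; linarith
end
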